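/- Let N \ge 1 and let (T^1, W^1), \ldots, (T^N, W^N) be i.i.d. pairs, where each W^\kappa is a real-valued centered Gaussian process with E[W^\kappa_u] = 0, E[W^\kappa_u W^\kappa_v] = min(u,v), continuous sample paths and joint measurability, each T^\kappa > 0 has distribution q on (0,\infty) with \int_0^\infty \tau\, q(d\tau) < \infty and is independent of W^\kappa, and the N pairs are mutually independent. Let \Lambda \ge 0 be an integrable random variable independent of the whole family. Define Y^\kappa_t = e^{-t/T^\kappa} W^\kappa_{T^\kappa(e^{2t/T^\kappa}-1)} and Z_t = \sqrt{\Lambda} \sum_{\kappa=1}^N Y^\kappa_t. Then for all s,t \ge 0: E[Z_t Z_s] = N\, E[\Lambda] \int_0^\infty \tau\,(e^{-|t-s|/\tau} - e^{-(t+s)/\tau})\, q(d\tau). In particular the correlation of Z_t is in general non-exponential in |t-s|, being a q-mixture of exponentials. -/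

import Mathlib

open MeasureTheory ProbabilityTheory

/-!
Since `T^κ` is independent of `W^κ`, the pair `(T^κ, W^κ)` has law `q ⊗ ρ`, where `ρ` is the law
of the Wiener path; conditionally on `T^κ = τ`, `Y^κ` is a time-changed Wiener process whose
covariance `e^{-(t+s)/τ} min(τ(e^{2t/τ}-1), τ(e^{2s/τ}-1))` is the stationary-minus-transient
OU covariance `τ(e^{-|t-s|/τ} - e^{-(t+s)/τ}) ≤ τ`. Integrating over `τ` (Fubini, justified by
`∫ τ dq < ∞`) gives `E[Y^κ_t Y^κ_s]`; distinct `Y^κ` are independent and centred, so only the `N`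
diagonal terms of `E[(∑ Y_t)(∑ Y_s)]` survive, and independence of `Λ` factors out `E[Λ]`.
-/

/-- Evaluation of a path at a random time is measurable on continuous paths (a Carathéodory
function), but not on `ℝ → ℝ` with its product σ-algebra. -/
abbrev ContinuousPath : Type := {f : ℝ → ℝ // Continuous f}

theorem measurable_continuousPath_eval :
    Measurable fun x : ℝ × ContinuousPath => x.2.1 x.1 :=
  measurable_uncurry_of_continuous_of_measurable (u := fun u (w : ContinuousPath) => w.1 u)
    (fun w => w.2) fun u => (measurable_pi_apply u).comp measurable_subtype_coe

section Independence

variable {Ω : Type*}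

section Comap

variable {α β : Type*} [MeasurableSpace α] [MeasurableSpace β] {p : β → Prop}

/- A subtype carries the induced σ-algebra, so a random variable generates the same σ-algebra
whether its values are read in the subtype or in the ambient type; this transfers the
independence hypotheses from `ℝ → ℝ` to continuous paths. -/
theorem comap_prodMk_subtype (X : Ω → α) (V : Ω → Subtype p) :
    MeasurableSpace.comap (fun ω => (X ω, V ω)) inferInstance =
      MeasurableSpace.comap (fun ω => (X ω, (V ω : β))) inferInstance := by
  calc _ = _ := MeasurableSpace.comap_prodMk X V
    _ = _ := congrArg _ MeasurableSpace.comap_comp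
    _ = _ := (MeasurableSpace.comap_prodMk X fun ω => (V ω : β)).symm

theorem comap_pi_prodMk_subtype {ι : Type*} (X : ι → Ω → α) (V : ι → Ω → Subtype p) :
    MeasurableSpace.comap (fun ω i => (X i ω, V i ω)) inferInstance =
      MeasurableSpace.comap (fun ω i => (X i ω, (V i ω : β))) inferInstance := by
  rw [MeasurableSpace.comap_process_pi fun i ω => (X i ω, V i ω),
    MeasurableSpace.comap_process_pi fun i ω => (X i ω, (V i ω : β))]
  simp_rw [comap_prodMk_subtype]

end Comap

variable [MeasurableSpace Ω] {μ : Measure Ω}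

theorem ProbabilityTheory.IndepFun.of_comap_eq {β β' γ γ' : Type*} [MeasurableSpace β]
    [MeasurableSpace β'] [MeasurableSpace γ] [MeasurableSpace γ'] {f : Ω → β} {f' : Ω → β'}
    {g : Ω → γ} {g' : Ω → γ'} (h : IndepFun f g μ)
    (hf : MeasurableSpace.comap f inferInstance = MeasurableSpace.comap f' inferInstance)
    (hg : MeasurableSpace.comap g inferInstance = MeasurableSpace.comap g' inferInstance) :
    IndepFun f' g' μ := by
  rw [IndepFun, Kernel.IndepFun] at h ⊢
  rwa [← hf, ← hg]

theorem map_prodMk_subtype_eq_prod [IsFiniteMeasure μ] {α β : Type*} [MeasurableSpace α]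
    [MeasurableSpace β] {p : β → Prop} {X : Ω → α} {V : Ω → Subtype p} (hX : Measurable X)
    (hV : Measurable V) (h : IndepFun X (fun ω => (V ω : β)) μ) :
    μ.map (fun ω => (X ω, V ω)) = (μ.map X).prod (μ.map V) :=
  (indepFun_iff_map_prod_eq_prod_map_map hX.aemeasurable hV.aemeasurable).1
    (h.of_comap_eq rfl (MeasurableSpace.comap_comp (f := Subtype.val) (g := V)).symm)

theorem integral_sqrt_mul_mul_sqrt_mul {Λ X Y : Ω → ℝ} (hΛ : ∀ᵐ ω ∂μ, 0 ≤ Λ ω)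
    (hΛm : AEStronglyMeasurable Λ μ) (hXY : AEStronglyMeasurable (fun ω => X ω * Y ω) μ)
    (hind : IndepFun Λ (fun ω => X ω * Y ω) μ) :
    ∫ ω, √(Λ ω) * X ω * (√(Λ ω) * Y ω) ∂μ = (∫ ω, Λ ω ∂μ) * ∫ ω, X ω * Y ω ∂μ := by
  rw [← hind.integral_fun_mul_eq_mul_integral hΛm hXY]
  refine integral_congr_ae (hΛ.mono fun ω hω => ?_)
  linear_combination (X ω * Y ω) * Real.mul_self_sqrt hω

theorem integral_sum_mul_sum_of_indepFun {ι : Type*} [Fintype ι] {A B : ι → Ω → ℝ} {c : ℝ}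
    (hA : ∀ i, Integrable (A i) μ) (hB : ∀ i, Integrable (B i) μ)
    (hA0 : ∀ i, ∫ ω, A i ω ∂μ = 0) (hindep : ∀ i j, i ≠ j → IndepFun (A i) (B j) μ)
    (hAB : ∀ i, Integrable (fun ω => A i ω * B i ω) μ) (hABc : ∀ i, ∫ ω, A i ω * B i ω ∂μ = c) :
    ∫ ω, (∑ i, A i ω) * (∑ j, B j ω) ∂μ = Fintype.card ι * c := by
  classical
  have hint (i j : ι) : Integrable (fun ω => A i ω * B j ω) μ := by
    rcases eq_or_ne i j with rfl | hij
    · exact hAB i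
    · exact (hindep i j hij).integrable_mul (hA i) (hB j)
  have hval (i j : ι) : ∫ ω, A i ω * B j ω ∂μ = if i = j then c else 0 := by
    rcases eq_or_ne i j with rfl | hij
    · rw [if_pos rfl, hABc]
    · rw [if_neg hij, (hindep i j hij).integral_fun_mul_eq_mul_integral (hA i).1 (hB j).1,
        hA0, zero_mul]
  simp_rw [Finset.sum_mul_sum]
  rw [integral_finsetSum _ fun i _ => integrable_finsetSum _ fun j _ => hint i j]
  simp_rw [integral_finsetSum _ fun j _ => hint _ j, hval]
  simp

end Independence

section OrnsteinUhlenbeck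

open Real

noncomputable def ouClock (τ t : ℝ) : ℝ := τ * (exp (2 * t / τ) - 1)

noncomputable def ouCovariance (τ s t : ℝ) : ℝ := τ * (exp (-|t - s| / τ) - exp (-(t + s) / τ))

/-- Doob's time-change representation of the Ornstein–Uhlenbeck process with relaxation time
`x.1` driven by the Wiener path `x.2`. -/
noncomputable def ouPath (t : ℝ) (x : ℝ × ContinuousPath) : ℝ :=
  exp (-t / x.1) * x.2.1 (ouClock x.1 t)

variable {τ s t : ℝ}

theorem ouClock_nonneg (hτ : 0 < τ) (ht : 0 ≤ t) : 0 ≤ ouClock τ t :=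
  mul_nonneg hτ.le (sub_nonneg.2 (one_le_exp (by positivity)))

theorem ouClock_monotone (hτ : 0 < τ) : Monotone (ouClock τ) := fun a b hab =>
  mul_le_mul_of_nonneg_left (sub_le_sub_right (exp_le_exp.2 (by gcongr)) 1) hτ.le

theorem exp_mul_exp_mul_ouClock_min :
    exp (-t / τ) * exp (-s / τ) * ouClock τ (min t s) = ouCovariance τ s t := by
  have key (a : ℝ) (ha : -|t - s| = -(t + s) + 2 * a) :
      exp (-t / τ) * exp (-s / τ) * ouClock τ a = ouCovariance τ s t := by
    rw [ouClock, ouCovariance, ha, add_div, exp_add, ← exp_add (-t / τ)]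
    ring_nf
  rcases le_total t s with h | h
  · rw [min_eq_left h]
    exact key t (by rw [abs_of_nonpos (sub_nonpos.2 h)]; ring)
  · rw [min_eq_right h]
    exact key s (by rw [abs_of_nonneg (sub_nonneg.2 h)]; ring)

theorem abs_ouCovariance_self_le (hτ : 0 < τ) (ht : 0 ≤ t) : |ouCovariance τ t t| ≤ τ := by
  have h1 : exp (-(t + t) / τ) ≤ 1 :=
    exp_le_one_iff.2 (div_nonpos_of_nonpos_of_nonneg (by linarith) hτ.le)
  have h0 := exp_pos (-(t + t) / τ)
  rw [ouCovariance, sub_self, abs_zero, neg_zero, zero_div, exp_zero]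
  exact abs_le.2 ⟨by nlinarith, by nlinarith⟩

@[fun_prop]
theorem measurable_ouPath (t : ℝ) : Measurable (ouPath t) := by
  have hclock : Measurable fun x : ℝ × ContinuousPath => (ouClock x.1 t, x.2) := by
    unfold ouClock
    fun_prop
  exact (measurable_const.div measurable_fst).exp.mul (measurable_continuousPath_eval.comp hclock)

end OrnsteinUhlenbeck

structure HasWienerMoments (ρ : Measure ContinuousPath) : Prop where
  memLp : ∀ u, 0 ≤ u → MemLp (fun w : ContinuousPath => w.1 u) 2 ρ
  integral_eq_zero : ∀ u, 0 ≤ u → ∫ w, w.1 u ∂ρ = 0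
  integral_mul : ∀ u v, 0 ≤ u → 0 ≤ v → ∫ w, w.1 u * w.1 v ∂ρ = min u v

theorem hasWienerMoments_map {Ω : Type*} [MeasurableSpace Ω] {μ : Measure Ω}
    {V : Ω → ContinuousPath} (hV : Measurable V)
    (hgauss : ∀ u, 0 ≤ u → μ.map (fun ω => (V ω).1 u) = gaussianReal 0 u.toNNReal)
    (hmean : ∀ u, 0 ≤ u → ∫ ω, (V ω).1 u ∂μ = 0)
    (hcov : ∀ u v, 0 ≤ u → 0 ≤ v → ∫ ω, (V ω).1 u * (V ω).1 v ∂μ = min u v) :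
    HasWienerMoments (μ.map V) := by
  have heval (u : ℝ) : Measurable fun w : ContinuousPath => w.1 u :=
    (measurable_pi_apply u).comp measurable_subtype_coe
  refine ⟨fun u hu => ?_, fun u hu => ?_, fun u v hu hv => ?_⟩
  · have hgaussLp : MemLp id 2 (μ.map fun ω => (V ω).1 u) := by
      rw [hgauss u hu]
      exact memLp_id_gaussianReal' 2 (by simp)
    rw [memLp_map_measure_iff (heval u).aestronglyMeasurable hV.aemeasurable]
    exact (memLp_map_measure_iff aestronglyMeasurable_id ((heval u).comp hV).aemeasurable).1
      hgaussLp
  · rw [integral_map hV.aemeasurable (heval u).aestronglyMeasurable]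
    exact hmean u hu
  · have hprod : Measurable fun w : ContinuousPath => w.1 u * w.1 v := (heval u).mul (heval v)
    rw [integral_map hV.aemeasurable hprod.aestronglyMeasurable]
    exact hcov u v hu hv

namespace HasWienerMoments

variable {q : Measure ℝ} {ρ : Measure ContinuousPath} {τ s t : ℝ} (hρ : HasWienerMoments ρ)
include hρ

theorem memLp_ouPath_section (hτ : 0 < τ) (ht : 0 ≤ t) :
    MemLp (fun w => ouPath t (τ, w)) 2 ρ :=
  (hρ.memLp _ (ouClock_nonneg hτ ht)).const_mul (Real.exp (-t / τ))

theorem integral_ouPath_mul_section (hτ : 0 < τ) (hs : 0 ≤ s) (ht : 0 ≤ t) :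
    ∫ w, ouPath t (τ, w) * ouPath s (τ, w) ∂ρ = ouCovariance τ s t := by
  calc ∫ w, ouPath t (τ, w) * ouPath s (τ, w) ∂ρ
      = Real.exp (-t / τ) * Real.exp (-s / τ) *
          ∫ w, w.1 (ouClock τ t) * w.1 (ouClock τ s) ∂ρ := by
        rw [← integral_const_mul]
        congr with w
        simp only [ouPath]
        ring
    _ = ouCovariance τ s t := by
        rw [hρ.integral_mul _ _ (ouClock_nonneg hτ ht) (ouClock_nonneg hτ hs),
          ← (ouClock_monotone hτ).map_min, exp_mul_exp_mul_ouClock_min]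

variable (hq : ∀ᵐ τ ∂q, 0 < τ) (hqint : Integrable (fun τ => τ) q)
include hq hqint

theorem memLp_ouPath [SFinite ρ] (ht : 0 ≤ t) : MemLp (ouPath t) 2 (q.prod ρ) := by
  have hsq := (measurable_ouPath t).pow_const 2
  refine (memLp_two_iff_integrable_sq (measurable_ouPath t).aestronglyMeasurable).2 <|
    (integrable_prod_iff hsq.aestronglyMeasurable).2 ⟨?_, ?_⟩
  · filter_upwards [hq] with τ hτ
    exact (hρ.memLp_ouPath_section hτ ht).integrable_sq
  · refine hqint.mono' hsq.aestronglyMeasurable.norm.integral_prod_right' ?_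
    filter_upwards [hq] with τ hτ
    simp_rw [norm_pow, Real.norm_eq_abs, sq_abs, sq, hρ.integral_ouPath_mul_section hτ ht ht]
    exact abs_ouCovariance_self_le hτ ht

theorem integral_ouPath [IsFiniteMeasure q] [IsFiniteMeasure ρ] (ht : 0 ≤ t) :
    ∫ x, ouPath t x ∂(q.prod ρ) = 0 := by
  rw [integral_prod _ ((hρ.memLp_ouPath hq hqint ht).integrable one_le_two)]
  refine integral_eq_zero_of_ae (hq.mono fun τ hτ => ?_)
  simp only [ouPath, Pi.zero_apply]
  rw [integral_const_mul, hρ.integral_eq_zero _ (ouClock_nonneg hτ ht), mul_zero]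

theorem integral_ouPath_mul [SFinite q] [SFinite ρ] (hs : 0 ≤ s) (ht : 0 ≤ t) :
    ∫ x, ouPath t x * ouPath s x ∂(q.prod ρ) = ∫ τ, ouCovariance τ s t ∂q := by
  have hint := (hρ.memLp_ouPath hq hqint ht).integrable_mul (hρ.memLp_ouPath hq hqint hs)
  rw [integral_prod (fun x => ouPath t x * ouPath s x) hint]
  exact integral_congr_ae (hq.mono fun τ hτ => hρ.integral_ouPath_mul_section hτ hs ht)

end HasWienerMoments

theorem integral_sum_ouPath_mul_sum {Ω ι : Type*} [MeasurableSpace Ω] {μ : Measure Ω}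
    [IsFiniteMeasure μ] [Fintype ι] {q : Measure ℝ} [IsFiniteMeasure q]
    {ρ : ι → Measure ContinuousPath} [∀ i, IsFiniteMeasure (ρ i)]
    {P : ι → Ω → ℝ × ContinuousPath} (hP : ∀ i, Measurable (P i))
    (hlaw : ∀ i, μ.map (P i) = q.prod (ρ i)) (hρ : ∀ i, HasWienerMoments (ρ i))
    (hindep : ∀ i j, i ≠ j → IndepFun (P i) (P j) μ)
    (hq : ∀ᵐ τ ∂q, 0 < τ) (hqint : Integrable (fun τ => τ) q) {s t : ℝ} (hs : 0 ≤ s)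
    (ht : 0 ≤ t) :
    ∫ ω, (∑ i, ouPath t (P i ω)) * (∑ i, ouPath s (P i ω)) ∂μ =
      Fintype.card ι * ∫ τ, ouCovariance τ s t ∂q := by
  have hmemLp {r : ℝ} (hr : 0 ≤ r) (i : ι) : MemLp (fun ω => ouPath r (P i ω)) 2 μ := by
    refine (memLp_map_measure_iff (measurable_ouPath r).aestronglyMeasurable
      (hP i).aemeasurable).1 ?_
    rw [hlaw i]
    exact (hρ i).memLp_ouPath hq hqint hr
  have hmap {f : ℝ × ContinuousPath → ℝ} (hf : Measurable f) (i : ι) :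
      ∫ ω, f (P i ω) ∂μ = ∫ x, f x ∂(q.prod (ρ i)) := by
    rw [← hlaw i, integral_map (hP i).aemeasurable hf.aestronglyMeasurable]
  refine integral_sum_mul_sum_of_indepFun (fun i => (hmemLp ht i).integrable one_le_two)
    (fun i => (hmemLp hs i).integrable one_le_two) (fun i => ?_)
    (fun i j hij => (hindep i j hij).comp (measurable_ouPath t) (measurable_ouPath s))
    (fun i => (hmemLp ht i).integrable_mul (hmemLp hs i)) (fun i => ?_)
  · rw [hmap (measurable_ouPath t)]
    exact (hρ i).integral_ouPath hq hqint ht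
  · rw [hmap (f := fun x => ouPath t x * ouPath s x)
      ((measurable_ouPath t).mul (measurable_ouPath s))]
    exact (hρ i).integral_ouPath_mul hq hqint hs ht

theorem com_correlation_mixture_general
    {Ω : Type*} [MeasurableSpace Ω] (μ : Measure Ω) [IsProbabilityMeasure μ]
    (N : ℕ)
    (q : Measure ℝ) [IsProbabilityMeasure q] (hq : q (Set.Iic 0) = 0)
    (hqint : Integrable (fun τ : ℝ => τ) q)
    (T : Fin N → Ω → ℝ) (W : Fin N → ℝ → Ω → ℝ)
    (hTmeas : ∀ κ, Measurable (T κ))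
    (hWmeas : ∀ κ, Measurable (Function.uncurry (W κ)))
    (hWcont : ∀ κ ω, Continuous (fun u => W κ u ω))
    -- each `W^κ` is a centered Gaussian process:
    (hWgauss : ∀ κ u, 0 ≤ u → Measure.map (W κ u) μ = gaussianReal 0 (Real.toNNReal u))
    (hWmean : ∀ κ u, 0 ≤ u → ∫ ω, W κ u ω ∂μ = 0)
    (hWcov : ∀ κ u v, 0 ≤ u → 0 ≤ v → ∫ ω, W κ u ω * W κ v ω ∂μ = min u v)
    (hTlaw : ∀ κ, Measure.map (T κ) μ = q)
    -- within each pair, `T^κ` is independent of the process `W^κ`: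
    (hTW : ∀ κ, IndepFun (T κ) (fun ω => fun u => W κ u ω) μ)
    -- the `N` pairs are mutually independent:
    (hindep : iIndepFun
      (fun κ ω => (T κ ω, fun u => W κ u ω)) μ)
    (Λ : Ω → ℝ) (hΛmeas : Measurable Λ) (hΛnn : ∀ᵐ ω ∂μ, 0 ≤ Λ ω)
    -- `Λ` is independent of the whole family:
    (hΛindep : IndepFun Λ (fun ω => fun κ => (T κ ω, fun u => W κ u ω)) μ)
    (Y : Fin N → ℝ → Ω → ℝ)
    (hY : ∀ κ t ω, Y κ t ω =
      Real.exp (-t / T κ ω) * W κ (T κ ω * (Real.exp (2 * t / T κ ω) - 1)) ω)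
    (Z : ℝ → Ω → ℝ)
    (hZ : ∀ t ω, Z t ω = Real.sqrt (Λ ω) * ∑ κ, Y κ t ω) :
    ∀ s t : ℝ, 0 ≤ s → 0 ≤ t →
      (∫ ω, Z t ω * Z s ω ∂μ) =
        N * (∫ ω, Λ ω ∂μ) *
          ∫ τ, τ * (Real.exp (-|t - s| / τ) - Real.exp (-(t + s) / τ)) ∂q := by
  intro s t hs ht
  let path (κ : Fin N) (ω : Ω) : ContinuousPath := ⟨fun u => W κ u ω, hWcont κ ω⟩
  let P (κ : Fin N) (ω : Ω) : ℝ × ContinuousPath := (T κ ω, path κ ω)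
  have hpath (κ : Fin N) : Measurable (path κ) :=
    (measurable_pi_lambda _ fun u => (hWmeas κ).comp measurable_prodMk_left).subtype_mk
  have hP (κ : Fin N) : Measurable (P κ) := (hTmeas κ).prodMk (hpath κ)
  have hlaw (κ : Fin N) : μ.map (P κ) = q.prod (μ.map (path κ)) := by
    rw [← hTlaw κ]
    exact map_prodMk_subtype_eq_prod (hTmeas κ) (hpath κ) (hTW κ)
  have hpairs (κ l : Fin N) (h : κ ≠ l) : IndepFun (P κ) (P l) μ :=
    (hindep.indepFun h).of_comap_eq (comap_prodMk_subtype (T κ) (path κ)).symm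
      (comap_prodMk_subtype (T l) (path l)).symm
  have hsum : Measurable fun x : Fin N → ℝ × ContinuousPath =>
      (∑ κ, ouPath t (x κ)) * ∑ κ, ouPath s (x κ) := by fun_prop
  have hΛP : IndepFun Λ (fun ω => (∑ κ, ouPath t (P κ ω)) * ∑ κ, ouPath s (P κ ω)) μ :=
    (hΛindep.of_comap_eq rfl (comap_pi_prodMk_subtype T path).symm).comp measurable_id hsum
  have hZP (r : ℝ) (ω : Ω) : Z r ω = √(Λ ω) * ∑ κ, ouPath r (P κ ω) := by
    simp only [hZ, hY]
    rfl
  have hq' : ∀ᵐ τ ∂q, 0 < τ := ae_iff.2 (by simp only [not_lt]; exact hq)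
  simp_rw [hZP]
  rw [integral_sqrt_mul_mul_sqrt_mul hΛnn hΛmeas.aestronglyMeasurable
      (hsum.comp (measurable_pi_lambda _ hP)).aestronglyMeasurable hΛP,
    integral_sum_ouPath_mul_sum hP hlaw
      (fun κ => hasWienerMoments_map (hpath κ) (hWgauss κ) (hWmean κ) (hWcov κ)) hpairs hq' hqint
      hs ht, Fintype.card_fin]
  simp only [ouCovariance]
  ring

/-- For `N` i.i.d. pairs `(T^κ, W^κ)` of a relaxation time `T^κ` with law `q` on `(0,∞)`
(with `∫ τ q(dτ) < ∞`) independent of a Wiener process `W^κ`, and an integrable nonnegative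
random amplitude `Λ` independent of the whole family, the centre-of-mass like process
`Z_t = √Λ ∑_κ Y^κ_t`, with `Y^κ_t = e^{-t/T^κ} W^κ_{T^κ(e^{2t/T^κ}-1)}`, has the
non-exponential two-time correlation
`E[Z_t Z_s] = N E[Λ] ∫ τ (e^{-|t-s|/τ} - e^{-(t+s)/τ}) q(dτ)`: a `q`-mixture of
exponentials. -/
theorem com_correlation_mixture
    {Ω : Type*} [MeasurableSpace Ω] (μ : Measure Ω) [IsProbabilityMeasure μ]
    (N : ℕ) (hN : 0 < N)
    (q : Measure ℝ) [IsProbabilityMeasure q] (hq : q (Set.Iic 0) = 0)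
    (hqint : Integrable (fun τ : ℝ => τ) q)
    (T : Fin N → Ω → ℝ) (W : Fin N → ℝ → Ω → ℝ)
    (hTmeas : ∀ κ, Measurable (T κ))
    (hWmeas : ∀ κ, Measurable (Function.uncurry (W κ)))
    (hWcont : ∀ κ ω, Continuous (fun u => W κ u ω))
    -- each `W^κ` is a centered Gaussian process:
    (hWgauss : ∀ κ u, 0 ≤ u → Measure.map (W κ u) μ = gaussianReal 0 (Real.toNNReal u))
    (hWmean : ∀ κ u, 0 ≤ u → ∫ ω, W κ u ω ∂μ = 0)
    (hWcov : ∀ κ u v, 0 ≤ u → 0 ≤ v → ∫ ω, W κ u ω * W κ v ω ∂μ = min u v)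
    (hTpos : ∀ κ, ∀ᵐ ω ∂μ, 0 < T κ ω)
    (hTlaw : ∀ κ, Measure.map (T κ) μ = q)
    -- within each pair, `T^κ` is independent of the process `W^κ`:
    (hTW : ∀ κ, IndepFun (T κ) (fun ω => fun u => W κ u ω) μ)
    -- the `N` pairs are mutually independent:
    (hindep : iIndepFun
      (fun κ ω => (T κ ω, fun u => W κ u ω)) μ)
    -- and identically distributed:
    (hident : ∀ κ, Measure.map (fun ω => (T κ ω, fun u => W κ u ω)) μ
      = Measure.map (fun ω => (T ⟨0, hN⟩ ω, fun u => W ⟨0, hN⟩ u ω)) μ)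
    (Λ : Ω → ℝ) (hΛmeas : Measurable Λ) (hΛnn : ∀ᵐ ω ∂μ, 0 ≤ Λ ω)
    (hΛint : Integrable Λ μ)
    -- `Λ` is independent of the whole family:
    (hΛindep : IndepFun Λ (fun ω => fun κ => (T κ ω, fun u => W κ u ω)) μ)
    (Y : Fin N → ℝ → Ω → ℝ)
    (hY : ∀ κ t ω, Y κ t ω =
      Real.exp (-t / T κ ω) * W κ (T κ ω * (Real.exp (2 * t / T κ ω) - 1)) ω)
    (Z : ℝ → Ω → ℝ)
    (hZ : ∀ t ω, Z t ω = Real.sqrt (Λ ω) * ∑ κ, Y κ t ω) :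
    ∀ s t : ℝ, 0 ≤ s → 0 ≤ t →
      (∫ ω, Z t ω * Z s ω ∂μ) =
        N * (∫ ω, Λ ω ∂μ) *
          ∫ τ, τ * (Real.exp (-|t - s| / τ) - Real.exp (-(t + s) / τ)) ∂q :=
  com_correlation_mixture_general μ N q hq hqint T W hTmeas hWmeas hWcont hWgauss hWmean hWcov hTlaw
    hTW hindep Λ hΛmeas hΛnn hΛindep Y hY Z hZ
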